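/- arXiv:1603.01035 — 3 statements merged into one kernel-verified Lean document; each statement's English description precedes it below -/
import Mathlib

section
/- If k, h : I → ℝ are smooth functions on an interval satisfying the Euler–Lagrange equations k'' - k^3 + 2kh = 0 and h' - 3kk' = 0 with k non-constant, then there exist real constants e_1 < e_2 with e_2 > 0 (on a suitable subinterval) such that (k')^2 = -(k^2 - e_1)(k^2 - e_2) and h = (3/2)k^2 - (1/2)(e_1 + e_2). -/
-- helper: constant on open convex set from zero derivative
theorem my_const_aux {s : Set ℝ} (hos : IsOpen s) (hcs : Convex ℝ s) {f : ℝ → ℝ}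
    (hf : ∀ u ∈ s, HasDerivAt f 0 u) {x y : ℝ} (hx : x ∈ s) (hy : y ∈ s) : f x = f y := by
  apply hcs.is_const_of_fderivWithin_eq_zero
    (fun u hu => ((hf u hu).differentiableAt).differentiableWithinAt) ?_ hx hy
  intro u hu
  rw [fderivWithin_of_isOpen hos hu]
  have h1 := (hf u hu).hasFDerivAt
  have h2 : (ContinuousLinearMap.toSpanSingleton ℝ (0:ℝ)) = 0 := by ext; simp
  rw [h2] at h1; exact h1.fderiv

/-- a non-constant smooth solution (k,h) of the Euler–Lagrange equations
k'' - k³ + 2kh = 0, h' - 3kk' = 0 admits constants e₁ < e₂, e₂ > 0, such that on a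
suitable subinterval the first integral (k')² = -(k²-e₁)(k²-e₂) holds and
h = (3/2)k² - (1/2)(e₁+e₂). -/
theorem euler_lagrange_first_integral (a b : ℝ) (hab : a < b) (k h : ℝ → ℝ)
    (hk : ContDiffOn ℝ (⊤ : ℕ∞) k (Set.Ioo a b)) (hh : ContDiffOn ℝ (⊤ : ℕ∞) h (Set.Ioo a b))
    (heq1 : ∀ u ∈ Set.Ioo a b, deriv (deriv k) u - (k u)^3 + 2 * k u * h u = 0)
    (heq2 : ∀ u ∈ Set.Ioo a b, deriv h u - 3 * k u * deriv k u = 0)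
    (hnc : ¬ ∀ u ∈ Set.Ioo a b, ∀ v ∈ Set.Ioo a b, k u = k v) :
    ∃ e1 e2 : ℝ, e1 < e2 ∧ 0 < e2 ∧
      ∃ c d : ℝ, c < d ∧ Set.Ioo c d ⊆ Set.Ioo a b ∧
        ∀ u ∈ Set.Ioo c d,
          (deriv k u)^2 = -((k u)^2 - e1) * ((k u)^2 - e2) ∧
          h u = 3/2 * (k u)^2 - 1/2 * (e1 + e2) := by
  have hos : IsOpen (Set.Ioo a b) := isOpen_Ioo
  have hcs : Convex ℝ (Set.Ioo a b) := convex_Ioo a b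
  have hk1 : ContDiffOn ℝ (⊤ : ℕ∞) (deriv k) (Set.Ioo a b) := hk.deriv_of_isOpen hos (by simp)
  have hkd : ∀ u ∈ Set.Ioo a b, HasDerivAt k (deriv k u) u := fun u hu =>
    ((hk.contDiffAt (hos.mem_nhds hu)).differentiableAt (by simp)).hasDerivAt
  have hk'd : ∀ u ∈ Set.Ioo a b, HasDerivAt (deriv k) (deriv (deriv k) u) u := fun u hu =>
    ((hk1.contDiffAt (hos.mem_nhds hu)).differentiableAt (by simp)).hasDerivAt
  have hhd : ∀ u ∈ Set.Ioo a b, HasDerivAt h (deriv h u) u := fun u hu =>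
    ((hh.contDiffAt (hos.mem_nhds hu)).differentiableAt (by simp)).hasDerivAt
  set x₀ : ℝ := (a+b)/2 with hx₀def
  have hx₀ : x₀ ∈ Set.Ioo a b := ⟨by linarith, by linarith⟩
  -- Step 1: h = 3/2 k^2 + c₀
  set c₀ : ℝ := h x₀ - 3/2 * (k x₀)^2 with hc₀def
  have hF : ∀ u ∈ Set.Ioo a b, HasDerivAt (fun u => h u - 3/2 * (k u)^2) 0 u := by
    intro u hu
    have := (hhd u hu).sub (((hkd u hu).pow 2).const_mul (3/2))
    have e2 := heq2 u hu
    refine this.congr_deriv (Eq.symm ?_)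
    push_cast
    nlinarith [heq2 u hu]
  have hhc : ∀ u ∈ Set.Ioo a b, h u = 3/2 * (k u)^2 + c₀ := by
    intro u hu
    have := my_const_aux hos hcs hF hu hx₀
    rw [hc₀def]; linarith [this]
  -- Step 2: first integral
  set d₀ : ℝ := (deriv k x₀)^2 + (k x₀)^4 + 2*c₀*(k x₀)^2 with hd₀def
  have hG : ∀ u ∈ Set.Ioo a b,
      HasDerivAt (fun u => (deriv k u)^2 + (k u)^4 + 2*c₀*(k u)^2) 0 u := by
    intro u hu
    have := (((hk'd u hu).pow 2).add ((hkd u hu).pow 4)).add (((hkd u hu).pow 2).const_mul (2*c₀))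
    refine this.congr_deriv (Eq.symm ?_)
    have e1 := heq1 u hu
    have e2 := hhc u hu
    push_cast
    simp only [pow_one]
    linear_combination (-2*deriv k u)*e1 + (4*k u*deriv k u)*e2
  have hGc : ∀ u ∈ Set.Ioo a b, (deriv k u)^2 + (k u)^4 + 2*c₀*(k u)^2 = d₀ := by
    intro u hu
    exact my_const_aux hos hcs hG hu hx₀
  -- Step 3: some nonzero derivative
  obtain ⟨u₀, hu₀, hku₀⟩ : ∃ u₀ ∈ Set.Ioo a b, deriv k u₀ ≠ 0 := by
    by_contra hc
    push_neg at hc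
    apply hnc
    intro u hu v hv
    exact my_const_aux hos hcs (fun w hw => by
      have := hkd w hw; rwa [hc w hw] at this) hu hv
  -- Step 4: constants
  have hdisc : 0 < c₀^2 + d₀ := by
    have h1 := hGc u₀ hu₀
    have h2 : (deriv k u₀)^2 > 0 := by positivity
    nlinarith [sq_nonneg ((k u₀)^2 + c₀)]
  set r : ℝ := Real.sqrt (c₀^2 + d₀) with hrdef
  have hr : 0 < r := Real.sqrt_pos.mpr hdisc
  have hr2 : r^2 = c₀^2 + d₀ := Real.sq_sqrt hdisc.le
  refine ⟨-c₀ - r, -c₀ + r, by linarith, ?_, a, b, hab, le_refl _, ?_⟩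
  · -- 0 < -c₀ + r
    have h1 := hGc u₀ hu₀
    have h2 : (deriv k u₀)^2 > 0 := by positivity
    nlinarith [sq_nonneg (k u₀), sq_nonneg ((k u₀)^2 + c₀ - r), sq_nonneg ((k u₀)^2 + c₀ + r)]
  · intro u hu
    have h1 := hGc u hu
    have h2 := hhc u hu
    constructor
    · nlinarith [h1, hr2]
    · rw [h2]; ring
end

section
/- Let H(h,k,k') be the 𝔪(2,3)-valued expression H = -M^0_1 - M^4_2 - k·M^1_3 + k'·M^0_3 + (h-k^2)·M^0_2 and K = M^0_2 - M^4_1 - k·M^2_3 - h·M^0_1 (in the basis M^i_j of 𝔪(2,3) described below). If k,h : I → ℝ satisfy k'' - k^3 + 2kh = 0 and h' - 3kk' = 0, then along I the Lax equation H' = [H, K] holds, where H' denotes entrywise derivative (with k, k', h functions of u). -/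
open Matrix

/-- Elementary 5×5 matrix. -/
def Elem (i j : Fin 5) : Matrix (Fin 5) (Fin 5) ℝ := Matrix.single i j 1

/-- Basis elements M^i_j of 𝔪(2,3). -/
def M01 : Matrix (Fin 5) (Fin 5) ℝ := Elem 0 1 - Elem 1 4
def M02 : Matrix (Fin 5) (Fin 5) ℝ := Elem 0 2 + Elem 2 4
def M03 : Matrix (Fin 5) (Fin 5) ℝ := Elem 0 3 + Elem 3 4
def M13 : Matrix (Fin 5) (Fin 5) ℝ := Elem 1 3 + Elem 3 1
def M23 : Matrix (Fin 5) (Fin 5) ℝ := Elem 2 3 - Elem 3 2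
def M41 : Matrix (Fin 5) (Fin 5) ℝ := Elem 4 1 - Elem 1 0
def M42 : Matrix (Fin 5) (Fin 5) ℝ := Elem 4 2 + Elem 2 0

set_option maxHeartbeats 3000000 in
lemma bracket_eq (k k' h : ℝ) :
    (-M01 - M42 - k • M13 + k' • M03 + (h - k^2) • M02) *
      (M02 - M41 - k • M23 - h • M01)
    - (M02 - M41 - k • M23 - h • M01) *
      (-M01 - M42 - k • M13 + k' • M03 + (h - k^2) • M02)
    = (-k') • M13 + (k^3 - 2*k*h) • M03 + (k*k') • M02 := by
  ext i j
  fin_cases i <;> fin_cases j <;>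
    simp [M01, M02, M03, M13, M23, M41, M42, Elem, Matrix.mul_apply,
      Fin.sum_univ_five, Matrix.single, Matrix.smul_apply] <;> ring

/-- if k, h satisfy the Euler–Lagrange equations k'' - k³ + 2kh = 0 and
h' - 3kk' = 0 on an interval, then H = -M⁰₁ - M⁴₂ - k·M¹₃ + k'·M⁰₃ + (h-k²)·M⁰₂
satisfies the Lax equation H' = [H, K] with K = M⁰₂ - M⁴₁ - k·M²₃ - h·M⁰₁. -/
theorem lax_equation_for_momentum (a b : ℝ) (hab : a < b) (k h : ℝ → ℝ)
    (hk : ContDiffOn ℝ (⊤ : ℕ∞) k (Set.Ioo a b)) (hh : ContDiffOn ℝ (⊤ : ℕ∞) h (Set.Ioo a b))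
    (heq1 : ∀ u ∈ Set.Ioo a b, deriv (deriv k) u - (k u)^3 + 2 * k u * h u = 0)
    (heq2 : ∀ u ∈ Set.Ioo a b, deriv h u - 3 * k u * deriv k u = 0) :
    let H : ℝ → Matrix (Fin 5) (Fin 5) ℝ := fun u =>
      -M01 - M42 - k u • M13 + deriv k u • M03 + (h u - (k u)^2) • M02
    let K : ℝ → Matrix (Fin 5) (Fin 5) ℝ := fun u =>
      M02 - M41 - k u • M23 - h u • M01
    ∀ u ∈ Set.Ioo a b, ∀ i j : Fin 5,
      deriv (fun t => H t i j) u = (H u * K u - K u * H u) i j := by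
  intro H K u hu i j
  have hopen : Set.Ioo a b ∈ nhds u := isOpen_Ioo.mem_nhds hu
  have hkOn : ∀ᶠ t in nhds u, t ∈ Set.Ioo a b := hopen
  have hkc : ContDiffAt ℝ (⊤ : ℕ∞) k u := hk.contDiffAt hopen
  have hhc : ContDiffAt ℝ (⊤ : ℕ∞) h u := hh.contDiffAt hopen
  have hkd : DifferentiableAt ℝ k u := hkc.differentiableAt (by simp)
  have hhd : DifferentiableAt ℝ h u := hhc.differentiableAt (by simp)
  have hk'c : ContDiffAt ℝ (⊤ : ℕ∞) (deriv k) u := ((hk.deriv_of_isOpen isOpen_Ioo (by simp)).contDiffAt hopen)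
  have hk'd : DifferentiableAt ℝ (deriv k) u := hk'c.differentiableAt (by simp)
  have hHeq : (fun t => H t i j) = fun t =>
      (-M01 - M42) i j + (- k t) * M13 i j + deriv k t * M03 i j
        + (h t - (k t)^2) * M02 i j := by
    funext t
    simp [H, Matrix.add_apply, Matrix.sub_apply, Matrix.neg_apply, Matrix.smul_apply,
      smul_eq_mul]
    ring
  rw [hHeq]
  have hd1 : HasDerivAt (fun t => (- k t)) (- deriv k u) u := (hkd.hasDerivAt).neg
  have hd2 : HasDerivAt (fun t => deriv k t) (deriv (deriv k) u) u := hk'd.hasDerivAt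
  have hd3 : HasDerivAt (fun t => h t - (k t)^2)
      (deriv h u - 2 * k u * deriv k u) u := by
    have : HasDerivAt (fun t => (k t)^2) (2 * k u * deriv k u) u := by
      have : HasDerivAt (fun t => (k t)^2) _ u := (hkd.hasDerivAt).pow 2
      simpa [mul_comm, mul_assoc, mul_left_comm] using this
    exact (hhd.hasDerivAt).sub this
  have hD : HasDerivAt (fun t =>
      (-M01 - M42) i j + (- k t) * M13 i j + deriv k t * M03 i j
        + (h t - (k t)^2) * M02 i j)
      ((- deriv k u) * M13 i j + deriv (deriv k) u * M03 i j
        + (deriv h u - 2 * k u * deriv k u) * M02 i j) u := by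
    have := (((hasDerivAt_const u ((-M01 - M42) i j)).add (hd1.mul_const (M13 i j))).add
      (hd2.mul_const (M03 i j))).add (hd3.mul_const (M02 i j))
    exact this.congr_deriv (by ring)
  rw [hD.deriv]
  have e1 : deriv (deriv k) u = (k u)^3 - 2 * k u * h u := by linarith [heq1 u hu]
  have e2 : deriv h u = 3 * k u * deriv k u := by linarith [heq2 u hu]
  have := congrFun (congrFun (bracket_eq (k u) (deriv k u) (h u)) i) j
  show _ = (H u * K u - K u * H u) i j
  simp only [H, K]
  rw [this, e1, e2]
  simp only [Matrix.add_apply, Matrix.smul_apply, smul_eq_mul]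
  ring
end

section
/- Let γ_{(a,b)}(t) = (cos t, sin t, -a, √(1-a^2)·cos(bt), √(1-a^2)·sin(bt)) in Poincaré coordinates, with a ∈ (0,1), b > 0. Then γ_{(a,b)}(t) ∈ E^{1,2} for all t, and with the Lorentzian product ⟨x,y⟩ = -x_0y_0 - x_1y_1 + x_2y_2 + x_3y_3 + x_4y_4 one has ⟨γ', γ'⟩ = -1 + (1-a^2)b^2, so γ is timelike iff (1-a^2)b^2 < 1. -/
open Real

/-- the homogeneous curve γ_{(a,b)} of class C_{2.ii} lies in E^{1,2},
its velocity satisfies ⟨γ',γ'⟩ = -1 + (1-a²)b², and γ is timelike iff (1-a²)b² < 1. -/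
theorem homogeneous_curve_C2ii (a b : ℝ) (ha : a ∈ Set.Ioo (0:ℝ) 1) (hb : 0 < b) :
    let γ : ℝ → Fin 5 → ℝ := fun t =>
      ![cos t, sin t, -a, Real.sqrt (1 - a^2) * cos (b*t), Real.sqrt (1 - a^2) * sin (b*t)]
    let γ' : ℝ → Fin 5 → ℝ := fun t i => deriv (fun s => γ s i) t
    let Q : ℝ → ℝ := fun t =>
      -(γ' t 0)^2 - (γ' t 1)^2 + (γ' t 2)^2 + (γ' t 3)^2 + (γ' t 4)^2
    (∀ t : ℝ, (γ t 0)^2 + (γ t 1)^2 = 1 ∧ (γ t 2)^2 + (γ t 3)^2 + (γ t 4)^2 = 1) ∧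
    (∀ t : ℝ, Q t = -1 + (1 - a^2) * b^2) ∧
    ((∀ t : ℝ, Q t < 0) ↔ (1 - a^2) * b^2 < 1) := by
  obtain ⟨ha0, ha1⟩ := ha
  have h1a : (0:ℝ) ≤ 1 - a^2 := by nlinarith
  have hsq : Real.sqrt (1 - a^2) ^ 2 = 1 - a^2 := Real.sq_sqrt h1a
  intro γ γ' Q
  have hQ : ∀ t : ℝ, Q t = -1 + (1 - a^2) * b^2 := by
    intro t
    have d0 : deriv (fun s => γ s 0) t = -sin t := by
      simp [γ]
    have d1 : deriv (fun s => γ s 1) t = cos t := by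
      simp [γ]
    have d2 : deriv (fun s => γ s 2) t = 0 := by
      simp [γ]
    have d3 : deriv (fun s => γ s 3) t = Real.sqrt (1 - a^2) * (-(b * sin (b*t))) := by
      have : (fun s => γ s 3) = fun s => Real.sqrt (1 - a^2) * cos (b*s) := by
        funext s; simp [γ]
      have hd : HasDerivAt (fun s => Real.cos (b*s)) (-sin (b*t) * b) t :=
        (((hasDerivAt_id t).const_mul b).cos).congr_deriv (by simp [mul_comm])
      rw [this, deriv_const_mul _ hd.differentiableAt, hd.deriv]; ring
    have d4 : deriv (fun s => γ s 4) t = Real.sqrt (1 - a^2) * (b * cos (b*t)) := by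
      have : (fun s => γ s 4) = fun s => Real.sqrt (1 - a^2) * sin (b*s) := by
        funext s; simp [γ]
      have hd : HasDerivAt (fun s => Real.sin (b*s)) (cos (b*t) * b) t :=
        (((hasDerivAt_id t).const_mul b).sin).congr_deriv (by simp [mul_comm])
      rw [this, deriv_const_mul _ hd.differentiableAt, hd.deriv]; ring
    show -(γ' t 0)^2 - (γ' t 1)^2 + (γ' t 2)^2 + (γ' t 3)^2 + (γ' t 4)^2 = _
    simp only [γ', d0, d1, d2, d3, d4]
    have hc := sin_sq_add_cos_sq t
    have hc2 := sin_sq_add_cos_sq (b*t)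
    linear_combination (-1:ℝ)*hc + b^2*Real.sin (b*t)^2*hsq + b^2*Real.cos (b*t)^2*hsq + (1-a^2)*b^2*hc2
  refine ⟨?_, hQ, ?_⟩
  · intro t
    constructor
    · have hc := sin_sq_add_cos_sq t
      simp only [γ]
      simp only [Matrix.cons_val_zero, Matrix.cons_val_one, Matrix.head_cons]
      linarith
    · have hc2 := sin_sq_add_cos_sq (b*t)
      simp only [γ]
      simp only [Matrix.cons_val_zero, Matrix.cons_val_one, Matrix.head_cons,
        Matrix.cons_val_two, Matrix.tail_cons, Matrix.cons_val_three, Matrix.cons_val_four]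
      linear_combination Real.sin (b*t)^2*hsq + Real.cos (b*t)^2*hsq + (1-a^2)*hc2
  · constructor
    · intro h
      have := h 0
      rw [hQ 0] at this; linarith
    · intro h t
      rw [hQ t]; linarith
end
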